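/- Let α ∈ (0,1) be irrational, define a_{2k} = k and a_{2k+1} = k + α for k ∈ ℤ, let χ = 1_{(0,1)}, let (c_k)_{k∈ℤ} be a bounded positive real sequence, and let φ = Σ_{k∈ℤ} c_k·1_{(a_k,a_{k+1})}. If φ ∈ L^p(ℝ) for some 1 ≤ p < ∞ (equivalently, (c_k) ∈ ℓ^p(ℤ)), then the short-time Fourier transform V_χ φ has a zero: there exists (x,ξ) ∈ ℝ² such that V_χ φ(x,ξ) = 0. -/

import Mathlib

open MeasureTheory Complex

/-- The short-time Fourier transform of `f : ℝ → ℂ` with window `g`. -/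
noncomputable def stft (g f : ℝ → ℂ) (x ξ : ℝ) : ℂ :=
  ∫ t : ℝ, f t * (starRingEnd ℂ) (g (t - x)) *
    Complex.exp (-2 * Real.pi * Complex.I * ξ * t)

namespace StftAux

noncomputable def eF (ξ t : ℝ) : ℂ := Complex.exp (-2 * Real.pi * Complex.I * ξ * t)

lemma eF_eq (ξ t : ℝ) :
    eF ξ t = Complex.exp (((-(2 * Real.pi * ξ * t) : ℝ) : ℂ) * Complex.I) := by
  unfold eF; congr 1; push_cast; ring

lemma normSq_affine (u v θ : ℝ) :
    Complex.normSq ((u : ℂ) + (v : ℂ) * Complex.exp ((θ : ℂ) * Complex.I)) =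
      u ^ 2 + v ^ 2 + 2 * u * v * Real.cos θ := by
  simp only [Complex.exp_mul_I, ← Complex.ofReal_cos, ← Complex.ofReal_sin,
    Complex.normSq_apply, Complex.add_re, Complex.add_im, Complex.mul_re, Complex.mul_im,
    Complex.ofReal_re, Complex.ofReal_im, Complex.I_re, Complex.I_im]
  nlinarith [Real.sin_sq_add_cos_sq θ]

lemma normSq_expI (θ : ℝ) : Complex.normSq (Complex.exp ((θ : ℂ) * Complex.I)) = 1 := by
  have h := normSq_affine 0 1 θ
  simpa using h

lemma normSq_two (u v pθ qθ : ℝ) :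
    Complex.normSq ((u : ℂ) * Complex.exp ((pθ : ℂ) * Complex.I)
        + (v : ℂ) * Complex.exp ((qθ : ℂ) * Complex.I)) =
      u ^ 2 + v ^ 2 + 2 * u * v * Real.cos (qθ - pθ) := by
  have h : (u : ℂ) * Complex.exp ((pθ : ℂ) * Complex.I)
        + (v : ℂ) * Complex.exp ((qθ : ℂ) * Complex.I)
      = Complex.exp ((pθ : ℂ) * Complex.I)
        * ((u : ℂ) + (v : ℂ) * Complex.exp (((qθ - pθ : ℝ) : ℂ) * Complex.I)) := by
    rw [mul_add]
    congr 1
    · ring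
    · rw [mul_comm (Complex.exp _) _, mul_assoc, ← Complex.exp_add]
      congr 2
      push_cast; ring
  rw [h, Complex.normSq_mul, normSq_expI, one_mul, normSq_affine]

lemma exists_int_in (A B : ℝ) (h : 1 < B - A) : ∃ m : ℤ, A < m ∧ (m : ℝ) < B := by
  refine ⟨⌊A⌋ + 1, ?_, ?_⟩ <;> push_cast <;>
    [exact Int.lt_floor_add_one A; linarith [Int.floor_le A]]

section Struct

variable {α : ℝ} {a : ℤ → ℝ} {c : ℤ → ℝ}

lemma gap_cases (hae : ∀ k : ℤ, a (2*k) = (k : ℝ)) (hao : ∀ k : ℤ, a (2*k+1) = (k : ℝ) + α)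
    (j : ℤ) : a (j+1) = a j + α ∨ a (j+1) = a j + (1 - α) := by
  rcases Int.even_or_odd j with ⟨k, hk⟩ | ⟨k, hk⟩
  · left
    have h1 : j = 2*k := by omega
    subst h1
    rw [hae k, hao k]
  · right
    have h1 : j = 2*k+1 := by omega
    subst h1
    have h2 : (2*k+1)+1 = 2*(k+1) := by ring
    rw [h2, hae (k+1), hao k]
    push_cast; ring

lemma a_two_step (hae : ∀ k : ℤ, a (2*k) = (k : ℝ)) (hao : ∀ k : ℤ, a (2*k+1) = (k : ℝ) + α)
    (j : ℤ) : a (j+2) = a j + 1 := by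
  rcases Int.even_or_odd j with ⟨k, hk⟩ | ⟨k, hk⟩
  · have h1 : j = 2*k := by omega
    subst h1
    have h2 : 2*k+2 = 2*(k+1) := by ring
    rw [h2, hae (k+1), hae k]
    push_cast; ring
  · have h1 : j = 2*k+1 := by omega
    subst h1
    have h2 : 2*k+1+2 = 2*(k+1)+1 := by ring
    rw [h2, hao (k+1), hao k]
    push_cast; ring

lemma a_mono (hα : α ∈ Set.Ioo (0:ℝ) 1) (hae : ∀ k : ℤ, a (2*k) = (k : ℝ))
    (hao : ∀ k : ℤ, a (2*k+1) = (k : ℝ) + α) : StrictMono a := by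
  apply strictMono_int_of_lt_succ
  intro j
  rcases gap_cases hae hao j with h | h <;> rw [h] <;> [linarith [hα.1]; linarith [hα.2]]

lemma tsum_indicator_eq (hm : StrictMono a) {k : ℤ} {t : ℝ}
    (ht : t ∈ Set.Ioo (a k) (a (k+1))) :
    ∑' i : ℤ, (Set.Ioo (a i) (a (i+1))).indicator (fun _ => c i) t = c k := by
  rw [tsum_eq_single k]
  · rw [Set.indicator_of_mem ht]
  · intro i hi
    apply Set.indicator_of_notMem
    intro hti
    rcases lt_or_gt_of_ne hi with h | h
    · have h2 : a (i+1) ≤ a k := hm.monotone (by omega)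
      have := ht.1; have := hti.2; linarith
    · have h2 : a (k+1) ≤ a i := hm.monotone (by omega)
      have := ht.2; have := hti.1; linarith

lemma tsum_indicator_node (hm : StrictMono a) (k : ℤ) :
    ∑' i : ℤ, (Set.Ioo (a i) (a (i+1))).indicator (fun _ => c i) (a k) = 0 := by
  have h : ∀ i : ℤ, (Set.Ioo (a i) (a (i+1))).indicator (fun _ => c i) (a k) = 0 := by
    intro i
    apply Set.indicator_of_notMem
    intro hk
    have h1 : i < k := hm.lt_iff_lt.mp hk.1
    have h2 : k < i+1 := hm.lt_iff_lt.mp hk.2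
    omega
  simp [h]

lemma finite_large (hα : α ∈ Set.Ioo (0:ℝ) 1) (hae : ∀ k : ℤ, a (2*k) = (k : ℝ))
    (hao : ∀ k : ℤ, a (2*k+1) = (k : ℝ) + α)
    {p : ENNReal} (hp0 : p ≠ 0) (hptop : p ≠ ⊤)
    (hφ : MemLp (fun t : ℝ =>
        ∑' k : ℤ, (Set.Ioo (a k) (a (k+1))).indicator (fun _ => c k) t) p volume)
    {δ : ℝ} (hδ : 0 < δ) : {k : ℤ | δ ≤ c k}.Finite := by
  by_contra hfin
  have hS : {k : ℤ | δ ≤ c k}.Infinite := hfin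
  have hm : StrictMono a := a_mono hα hae hao
  set Φ : ℝ → ℝ := fun t : ℝ =>
    ∑' k : ℤ, (Set.Ioo (a k) (a (k+1))).indicator (fun _ => c k) t with hΦdef
  have hB : volume {t : ℝ | ENNReal.ofReal δ ≤ ‖Φ t‖₊} < ⊤ :=
    hφ.meas_ge_lt_top' hp0 hptop (ENNReal.ofReal_pos.mpr hδ).ne'
  have hsub : (⋃ k ∈ {k : ℤ | δ ≤ c k}, Set.Ioo (a k) (a (k+1)))
      ⊆ {t : ℝ | ENNReal.ofReal δ ≤ ‖Φ t‖₊} := by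
    intro t ht
    simp only [Set.mem_iUnion, Set.mem_setOf_eq] at ht
    obtain ⟨k, hk, htk⟩ := ht
    have heq : Φ t = c k := tsum_indicator_eq hm htk
    simp only [Set.mem_setOf_eq, heq]
    rw [show ((‖c k‖₊ : NNReal) : ENNReal) = ENNReal.ofReal (c k) from Real.enorm_eq_ofReal (le_trans hδ.le hk)]
    exact ENNReal.ofReal_le_ofReal hk
  have hdisj : {k : ℤ | δ ≤ c k}.PairwiseDisjoint
      (fun k => Set.Ioo (a k) (a (k+1))) := by
    intro i _ k _ hik
    simp only [Function.onFun, Set.Ioo_disjoint_Ioo]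
    rcases lt_or_gt_of_ne hik with h | h
    · exact le_trans (min_le_left _ _) (le_trans (hm.monotone (by omega)) (le_max_right _ _))
    · exact le_trans (min_le_right _ _) (le_trans (hm.monotone (by omega)) (le_max_left _ _))
  have hmeas : volume (⋃ k ∈ {k : ℤ | δ ≤ c k}, Set.Ioo (a k) (a (k+1)))
      = ∑' k : {k : ℤ | δ ≤ c k}, volume (Set.Ioo (a k) (a (k+1))) :=
    measure_biUnion (Set.to_countable _) hdisj
      (fun k _ => (measurableSet_Ioo : MeasurableSet (Set.Ioo (a k) (a (k+1)))))
  have hγ : (0:ℝ) < min α (1-α) := lt_min hα.1 (by linarith [hα.2])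
  have hvol : ∀ k : ℤ, ENNReal.ofReal (min α (1-α)) ≤ volume (Set.Ioo (a k) (a (k+1))) := by
    intro k
    rw [Real.volume_Ioo]
    apply ENNReal.ofReal_le_ofReal
    rcases gap_cases hae hao k with h | h <;> rw [h] <;>
      [simpa using min_le_left α (1-α); simpa using min_le_right α (1-α)]
  haveI := hS.to_subtype
  have htop : (∑' _ : {k : ℤ | δ ≤ c k}, ENNReal.ofReal (min α (1-α))) = ⊤ :=
    ENNReal.tsum_const_eq_top_of_ne_zero (ENNReal.ofReal_pos.mpr hγ).ne'
  have : (⊤ : ENNReal) ≤ volume {t : ℝ | ENNReal.ofReal δ ≤ ‖Φ t‖₊} := by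
    calc (⊤ : ENNReal) = ∑' _ : {k : ℤ | δ ≤ c k}, ENNReal.ofReal (min α (1-α)) := htop.symm
    _ ≤ ∑' k : {k : ℤ | δ ≤ c k}, volume (Set.Ioo (a k) (a (k+1))) :=
        ENNReal.tsum_le_tsum (fun k => hvol k)
    _ = volume (⋃ k ∈ {k : ℤ | δ ≤ c k}, Set.Ioo (a k) (a (k+1))) := hmeas.symm
    _ ≤ _ := measure_mono hsub
  exact absurd (lt_of_le_of_lt this hB) (lt_irrefl ⊤)

end Struct

end StftAux

namespace StftAux

section Formula

variable {α : ℝ} {a : ℤ → ℝ} {c : ℤ → ℝ}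

lemma stft_formula (hα : α ∈ Set.Ioo (0:ℝ) 1) (hae : ∀ k : ℤ, a (2*k) = (k : ℝ))
    (hao : ∀ k : ℤ, a (2*k+1) = (k : ℝ) + α) (j : ℤ) (x ξ : ℝ) (hξ : ξ ≠ 0)
    (hx : x ∈ Set.Ioo (a j) (a (j+1))) :
    stft (Set.indicator (Set.Ioo (0 : ℝ) 1) (fun _ => (1 : ℂ)))
        (fun t : ℝ => ((∑' k : ℤ,
          Set.indicator (Set.Ioo (a k) (a (k + 1))) (fun _ => c k) t : ℝ) : ℂ)) x ξ
    = (-2 * (Real.pi:ℂ) * Complex.I * (ξ:ℂ))⁻¹ *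
      ( (c j : ℂ) * (eF ξ (a (j+1)) - eF ξ x)
        + (c (j+1) : ℂ) * (eF ξ (a (j+2)) - eF ξ (a (j+1)))
        + (c (j+2) : ℂ) * (eF ξ x * Complex.exp (-2 * (Real.pi:ℂ) * Complex.I * (ξ:ℂ))
            - eF ξ (a (j+2))) ) := by
  have hm : StrictMono a := a_mono hα hae hao
  have hq : a (j+2) = a j + 1 := a_two_step hae hao j
  have hpq : a (j+1) < a (j+2) := hm (by omega)
  have hxp : x < a (j+1) := hx.2
  have hax : a j < x := hx.1
  have hqx1 : a (j+2) < x + 1 := by rw [hq]; linarith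
  have hcc : (-2 * (Real.pi:ℂ) * Complex.I * (ξ:ℂ)) ≠ 0 := by
    apply mul_ne_zero
    apply mul_ne_zero
    apply mul_ne_zero
    · norm_num
    · exact_mod_cast Complex.ofReal_ne_zero.mpr Real.pi_ne_zero
    · exact Complex.I_ne_zero
    · exact Complex.ofReal_ne_zero.mpr hξ
  set cc : ℂ := -2 * (Real.pi:ℂ) * Complex.I * (ξ:ℂ) with hccdef
  have key : ∀ t : ℝ,
      ((∑' k : ℤ, Set.indicator (Set.Ioo (a k) (a (k + 1))) (fun _ => c k) t : ℝ) : ℂ)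
        * (starRingEnd ℂ) ((Set.Ioo (0:ℝ) 1).indicator (fun _ => (1:ℂ)) (t - x))
        * Complex.exp (-2 * (Real.pi:ℂ) * Complex.I * (ξ:ℂ) * (t:ℂ))
      = (Set.Ioo x (a (j+1))).indicator (fun s => (c j : ℂ) * eF ξ s) t
        + (Set.Ioo (a (j+1)) (a (j+2))).indicator (fun s => (c (j+1) : ℂ) * eF ξ s) t
        + (Set.Ioo (a (j+2)) (x+1)).indicator (fun s => (c (j+2) : ℂ) * eF ξ s) t := by
    intro t
    by_cases h1 : t ∈ Set.Ioo x (a (j+1))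
    · have hw : t - x ∈ Set.Ioo (0:ℝ) 1 := ⟨by linarith [h1.1], by linarith [h1.2]⟩
      have hphi : (∑' k : ℤ, Set.indicator (Set.Ioo (a k) (a (k + 1))) (fun _ => c k) t)
          = c j := tsum_indicator_eq hm ⟨lt_trans hax h1.1, h1.2⟩
      have h2 : t ∉ Set.Ioo (a (j+1)) (a (j+2)) := fun h => absurd h.1 (not_lt.mpr h1.2.le)
      have h3 : t ∉ Set.Ioo (a (j+2)) (x+1) := fun h => absurd h.1 (by push_neg; nlinarith [h1.2])
      simp only [Set.indicator_of_mem hw, Set.indicator_of_mem h1, Set.indicator_of_notMem h2,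
        Set.indicator_of_notMem h3, map_one, hphi, eF]
      ring
    · by_cases h2 : t ∈ Set.Ioo (a (j+1)) (a (j+2))
      · have hw : t - x ∈ Set.Ioo (0:ℝ) 1 := ⟨by linarith [h2.1], by linarith [h2.2]⟩
        have hphi : (∑' k : ℤ, Set.indicator (Set.Ioo (a k) (a (k + 1))) (fun _ => c k) t)
            = c (j+1) := by
          exact tsum_indicator_eq hm (c := c) (k := j+1) ⟨h2.1, by
            rw [show j+1+1 = j+2 by ring]; exact h2.2⟩
        have h3 : t ∉ Set.Ioo (a (j+2)) (x+1) := fun h => absurd h.1 (not_lt.mpr h2.2.le)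
        simp only [Set.indicator_of_mem hw, Set.indicator_of_mem h2, Set.indicator_of_notMem h1,
          Set.indicator_of_notMem h3, map_one, hphi, eF]
        ring
      · by_cases h3 : t ∈ Set.Ioo (a (j+2)) (x+1)
        · have hw : t - x ∈ Set.Ioo (0:ℝ) 1 := ⟨by linarith [h3.1], by linarith [h3.2]⟩
          have hp3 : a (j+3) = a (j+1) + 1 := by
            have := a_two_step hae hao (j+1)
            rwa [show j+1+2 = j+3 by ring] at this
          have hphi : (∑' k : ℤ, Set.indicator (Set.Ioo (a k) (a (k + 1))) (fun _ => c k) t)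
              = c (j+2) := by
            exact tsum_indicator_eq hm (c := c) (k := j+2) ⟨h3.1, by
              rw [show j+2+1 = j+3 by ring, hp3]; linarith [h3.2]⟩
          simp only [Set.indicator_of_mem hw, Set.indicator_of_mem h3, Set.indicator_of_notMem h1,
            Set.indicator_of_notMem h2, map_one, hphi, eF]
          ring
        · by_cases hw : t - x ∈ Set.Ioo (0:ℝ) 1
          · have hx1 : x < t := by have := hw.1; linarith
            have hx2 : t < x + 1 := by have := hw.2; linarith
            have hnode : t = a (j+1) ∨ t = a (j+2) := by
              simp only [Set.mem_Ioo, not_and, not_lt] at h1 h2 h3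
              have hA := h1 hx1
              rcases eq_or_lt_of_le hA with he | hl
              · exact Or.inl he.symm
              · have hB := h2 hl
                rcases eq_or_lt_of_le hB with he | hl2
                · exact Or.inr he.symm
                · exact absurd (h3 hl2) (by push_neg; exact hx2)
            have hphi : (∑' k : ℤ, Set.indicator (Set.Ioo (a k) (a (k + 1))) (fun _ => c k) t)
                = 0 := by
              rcases hnode with h | h <;> rw [h] <;> exact tsum_indicator_node hm _
            simp [Set.indicator_of_notMem h1, Set.indicator_of_notMem h2,
              Set.indicator_of_notMem h3, hphi]
          · simp [Set.indicator_of_notMem hw, Set.indicator_of_notMem h1,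
              Set.indicator_of_notMem h2, Set.indicator_of_notMem h3]
  have hcont : ∀ coef : ℝ, Continuous (fun s : ℝ => (coef:ℂ) * eF ξ s) := by
    intro coef
    unfold eF
    apply Continuous.mul continuous_const
    apply Complex.continuous_exp.comp
    exact (continuous_const.mul Complex.continuous_ofReal)
  have hint : ∀ (b1 b2 coef : ℝ),
      Integrable ((Set.Ioo b1 b2).indicator (fun s => (coef:ℂ) * eF ξ s)) volume := by
    intro b1 b2 coef
    rw [integrable_indicator_iff measurableSet_Ioo]
    exact ((hcont coef).integrableOn_Icc).mono_set Set.Ioo_subset_Icc_self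
  have hval : ∀ (b1 b2 coef : ℝ), b1 ≤ b2 →
      (∫ t, (Set.Ioo b1 b2).indicator (fun s => (coef:ℂ) * eF ξ s) t)
        = (coef:ℂ) * ((Complex.exp (cc * b2) - Complex.exp (cc * b1)) / cc) := by
    intro b1 b2 coef hle
    rw [integral_indicator measurableSet_Ioo, ← integral_Ioc_eq_integral_Ioo,
      ← intervalIntegral.integral_of_le hle, intervalIntegral.integral_const_mul]
    congr 1
    exact integral_exp_mul_complex hcc
  unfold stft
  rw [integral_congr_ae (Filter.Eventually.of_forall key)]
  have hA := hint x (a (j+1)) (c j)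
  have hB := hint (a (j+1)) (a (j+2)) (c (j+1))
  have hC := hint (a (j+2)) (x+1) (c (j+2))
  have hAB : Integrable (fun t => (Set.Ioo x (a (j+1))).indicator (fun s => ((c j : ℝ):ℂ) * eF ξ s) t
      + (Set.Ioo (a (j+1)) (a (j+2))).indicator (fun s => ((c (j+1) : ℝ):ℂ) * eF ξ s) t) volume :=
    hA.add hB
  rw [integral_add hAB hC, integral_add hA hB]
  rw [hval _ _ _ hxp.le, hval _ _ _ hpq.le, hval _ _ _ hqx1.le]
  have hsplit : Complex.exp (cc * ((x:ℂ)+1)) = Complex.exp (cc * (x:ℂ)) * Complex.exp cc := by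
    rw [← Complex.exp_add]; congr 1; ring
  have heFx : eF ξ x = Complex.exp (cc * (x:ℂ)) := by unfold eF; rw [hccdef]
  have heFp : eF ξ (a (j+1)) = Complex.exp (cc * ((a (j+1)):ℂ)) := by
    unfold eF; rw [hccdef]
  have heFq : eF ξ (a (j+2)) = Complex.exp (cc * ((a (j+2)):ℂ)) := by
    unfold eF; rw [hccdef]
  rw [heFx, heFp, heFq]
  push_cast
  rw [hsplit]
  field_simp

noncomputable def Dq (c : ℤ → ℝ) (a : ℤ → ℝ) (j : ℤ) (ξ : ℝ) : ℂ :=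
  ((c j : ℂ) - c (j+1)) * eF ξ (a (j+1)) + ((c (j+1) : ℂ) - c (j+2)) * eF ξ (a (j+2))

noncomputable def Rq (c : ℤ → ℝ) (j : ℤ) (ξ : ℝ) : ℂ :=
  (c (j+2) : ℂ) * Complex.exp (-2 * (Real.pi:ℂ) * Complex.I * (ξ:ℂ)) - (c j : ℂ)

lemma normSq_Dq (j : ℤ) (ξ : ℝ) :
    Complex.normSq (Dq c a j ξ) = (c j - c (j+1))^2 + (c (j+1) - c (j+2))^2
      + 2*(c j - c (j+1))*(c (j+1) - c (j+2))
        * Real.cos (2*Real.pi*ξ*(a (j+2) - a (j+1))) := by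
  unfold Dq
  rw [eF_eq, eF_eq,
    show ((c j:ℂ) - c (j+1)) = (((c j - c (j+1) : ℝ)):ℂ) by push_cast; ring,
    show ((c (j+1):ℂ) - c (j+2)) = (((c (j+1) - c (j+2) : ℝ)):ℂ) by push_cast; ring,
    normSq_two]
  have h : (-(2*Real.pi*ξ*(a (j+2)))) - (-(2*Real.pi*ξ*(a (j+1))))
      = -(2*Real.pi*ξ*(a (j+2) - a (j+1))) := by ring
  rw [h, Real.cos_neg]

lemma normSq_Rq (j : ℤ) (ξ : ℝ) :
    Complex.normSq (Rq c j ξ) = (c j)^2 + (c (j+2))^2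
      - 2*(c j)*(c (j+2))*Real.cos (2*Real.pi*ξ) := by
  unfold Rq
  rw [show ((c (j+2) : ℂ) * Complex.exp (-2 * (Real.pi:ℂ) * Complex.I * (ξ:ℂ)) - (c j : ℂ))
      = (((-(c j) : ℝ)):ℂ) + (((c (j+2) : ℝ)):ℂ)
          * Complex.exp (((-(2*Real.pi*ξ) : ℝ) : ℂ) * Complex.I) by
    push_cast
    rw [show ((-(2*Real.pi*ξ) : ℂ)) * Complex.I = -2 * (Real.pi:ℂ) * Complex.I * (ξ:ℂ) by ring]
    ring]
  rw [normSq_affine, Real.cos_neg]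
  ring

lemma solve_x (hα : α ∈ Set.Ioo (0:ℝ) 1) (hae : ∀ k : ℤ, a (2*k) = (k : ℝ))
    (hao : ∀ k : ℤ, a (2*k+1) = (k : ℝ) + α) (j : ℤ) {ξ : ℝ}
    (hξ : 1 / (a (j+1) - a j) < ξ)
    (hDR : Complex.normSq (Dq c a j ξ) = Complex.normSq (Rq c j ξ)) :
    ∃ x ∈ Set.Ioo (a j) (a (j+1)), Rq c j ξ * eF ξ x + Dq c a j ξ = 0 := by
  have hm : StrictMono a := a_mono hα hae hao
  have hlen : 0 < a (j+1) - a j := sub_pos.mpr (hm (by omega))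
  have hξ0 : 0 < ξ := lt_trans (by positivity) hξ
  have hξlen : 1 < ξ * (a (j+1) - a j) := by
    rw [div_lt_iff₀ hlen] at hξ; linarith
  by_cases hR : Rq c j ξ = 0
  · have hD : Dq c a j ξ = 0 := by
      have h0 : Complex.normSq (Dq c a j ξ) = 0 := by rw [hDR, hR]; simp
      exact Complex.normSq_eq_zero.mp h0
    exact ⟨(a j + a (j+1))/2, ⟨by linarith [hlen], by linarith [hlen]⟩, by rw [hR, hD]; ring⟩
  · set u : ℂ := -Dq c a j ξ / Rq c j ξ with hu
    have hRn : Complex.normSq (Rq c j ξ) ≠ 0 := fun h => hR (Complex.normSq_eq_zero.mp h)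
    have hnu : Complex.normSq u = 1 := by
      rw [hu, Complex.normSq_div, Complex.normSq_neg, hDR]
      exact div_self hRn
    have habs : ‖u‖ = 1 := by
      have h1 : ‖u‖ ^ 2 = 1 := by rw [Complex.sq_norm, hnu]
      nlinarith [norm_nonneg u]
    have hexpu : Complex.exp ((u.arg : ℂ) * Complex.I) = u := by
      conv_rhs => rw [← Complex.norm_mul_exp_arg_mul_I u]
      rw [habs, Complex.ofReal_one, one_mul]
    have hπ : 0 < Real.pi := Real.pi_pos
    obtain ⟨m, hm1, hm2⟩ := exists_int_in (-ξ * a (j+1) - u.arg/(2*Real.pi))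
      (-ξ * a j - u.arg/(2*Real.pi)) (by nlinarith [hξlen])
    set x := -(u.arg + 2*Real.pi*m)/(2*Real.pi*ξ) with hxdef
    have h2πξ : 0 < 2*Real.pi*ξ := by positivity
    have hxval : x * (2*Real.pi*ξ) = -(u.arg + 2*Real.pi*m) := by
      rw [hxdef]; field_simp
    have hxIoo : x ∈ Set.Ioo (a j) (a (j+1)) := by
      constructor
      · rw [← mul_lt_mul_iff_of_pos_right h2πξ, hxval]
        have h1 := mul_lt_mul_of_pos_right hm2 (show (0:ℝ) < 2*Real.pi by positivity)
        have h2 : (-ξ * a j - u.arg/(2*Real.pi))*(2*Real.pi)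
            = -(ξ * (a j) * (2*Real.pi)) - u.arg := by field_simp
        rw [h2] at h1
        ring_nf at h1 ⊢
        linarith
      · rw [← mul_lt_mul_iff_of_pos_right h2πξ, hxval]
        have h1 := mul_lt_mul_of_pos_right hm1 (show (0:ℝ) < 2*Real.pi by positivity)
        have h2 : (-ξ * a (j+1) - u.arg/(2*Real.pi))*(2*Real.pi)
            = -(ξ * (a (j+1)) * (2*Real.pi)) - u.arg := by field_simp
        rw [h2] at h1
        ring_nf at h1 ⊢
        linarith
    have harg : (-(2*Real.pi*ξ*x) : ℝ) = u.arg + 2*Real.pi*m := by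
      linear_combination -hxval
    have hex : eF ξ x = u := by
      calc eF ξ x = Complex.exp (((u.arg + 2*Real.pi*m : ℝ) : ℂ) * Complex.I) := by
            rw [eF_eq, harg]
        _ = Complex.exp ((u.arg : ℂ) * Complex.I) * Complex.exp ((m:ℂ) * (2*(Real.pi:ℂ)*Complex.I)) := by
            rw [← Complex.exp_add]; congr 1; push_cast; ring
        _ = u * 1 := by rw [hexpu, Complex.exp_int_mul_two_pi_mul_I]
        _ = u := mul_one u
    refine ⟨x, hxIoo, ?_⟩
    rw [hex, hu]
    field_simp
    ring

end Formula

end StftAux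

open StftAux in
theorem stft_step_Lp_has_zero (α : ℝ) (hα : α ∈ Set.Ioo (0 : ℝ) 1)
    (hirr : Irrational α) (a : ℤ → ℝ)
    (haeven : ∀ k : ℤ, a (2 * k) = k) (haodd : ∀ k : ℤ, a (2 * k + 1) = k + α)
    (c : ℤ → ℝ) (hcpos : ∀ k, 0 < c k) (hcbdd : ∃ M : ℝ, ∀ k, c k ≤ M)
    (p : ENNReal) (hp1 : 1 ≤ p) (hptop : p ≠ ⊤)
    (hφ : MemLp (fun t : ℝ =>
        ∑' k : ℤ, Set.indicator (Set.Ioo (a k) (a (k + 1))) (fun _ => c k) t)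
      p volume) :
    ∃ x ξ : ℝ,
      stft (Set.indicator (Set.Ioo (0 : ℝ) 1) (fun _ => (1 : ℂ)))
        (fun t : ℝ => ((∑' k : ℤ,
          Set.indicator (Set.Ioo (a k) (a (k + 1))) (fun _ => c k) t : ℝ) : ℂ))
        x ξ = 0 := by
  have hm : StrictMono a := a_mono hα haeven haodd
  have hp0 : p ≠ 0 := by
    intro h; rw [h] at hp1; exact absurd hp1 (by simp)
  have hπ : 0 < Real.pi := Real.pi_pos
  -- reduction: it suffices to find j and ξ with the magnitude condition
  have main : ∀ (j : ℤ) (ξ : ℝ), 1 / (a (j+1) - a j) < ξ →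
      Complex.normSq (Dq c a j ξ) = Complex.normSq (Rq c j ξ) →
      ∃ x ξ' : ℝ,
        stft (Set.indicator (Set.Ioo (0 : ℝ) 1) (fun _ => (1 : ℂ)))
          (fun t : ℝ => ((∑' k : ℤ,
            Set.indicator (Set.Ioo (a k) (a (k + 1))) (fun _ => c k) t : ℝ) : ℂ))
          x ξ' = 0 := by
    intro j ξ hξ hDR
    have hlen : 0 < a (j+1) - a j := sub_pos.mpr (hm (by omega))
    have hξ0 : ξ ≠ 0 := ne_of_gt (lt_trans (by positivity) hξ)
    obtain ⟨x, hx, hzero⟩ := solve_x hα haeven haodd j hξ hDR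
    refine ⟨x, ξ, ?_⟩
    rw [stft_formula hα haeven haodd j x ξ hξ0 hx]
    have hrearr : (c j : ℂ) * (eF ξ (a (j+1)) - eF ξ x)
        + (c (j+1) : ℂ) * (eF ξ (a (j+2)) - eF ξ (a (j+1)))
        + (c (j+2) : ℂ) * (eF ξ x * Complex.exp (-2 * (Real.pi:ℂ) * Complex.I * (ξ:ℂ))
            - eF ξ (a (j+2)))
        = Rq c j ξ * eF ξ x + Dq c a j ξ := by
      unfold Rq Dq; ring
    rw [hrearr, hzero, mul_zero]
  by_cases hB : ∃ i : ℤ, c i = c (i+1)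
  · -- two adjacent equal values
    obtain ⟨j, hj⟩ := hB
    have hlen : 0 < a (j+1) - a j := sub_pos.mpr (hm (by omega))
    set n : ℤ := ⌈1 / (a (j+1) - a j)⌉ + 1 with hn
    have hξ : 1 / (a (j+1) - a j) < (n:ℝ) := by
      rw [hn]; push_cast; linarith [Int.le_ceil (1 / (a (j+1) - a j))]
    apply main j (n:ℝ) hξ
    rw [normSq_Dq, normSq_Rq, hj]
    have hcos : Real.cos (2*Real.pi*(n:ℝ)) = 1 := by
      rw [show 2*Real.pi*(n:ℝ) = (n:ℝ)*(2*Real.pi) by ring]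
      exact Real.cos_int_mul_two_pi n
    rw [hcos]
    ring
  · -- no adjacent equal values: strict local maximum exists
    push_neg at hB
    have hfin : {k : ℤ | c 0 ≤ c k}.Finite :=
      finite_large hα haeven haodd hp0 hptop hφ (hcpos 0)
    obtain ⟨j1, hj1mem, hj1max⟩ :=
      Set.Finite.exists_maximalFor c {k : ℤ | c 0 ≤ c k} hfin ⟨0, le_refl (c 0)⟩
    have hmax : ∀ k, c k ≤ c j1 := by
      intro k
      by_cases hk : c 0 ≤ c k
      · by_contra hlt
        push_neg at hlt
        exact absurd (hj1max hk hlt.le) (not_le.mpr hlt)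
      · push_neg at hk
        exact le_trans hk.le hj1mem
    set j : ℤ := j1 - 1 with hjdef
    have hj1 : j + 1 = j1 := by omega
    have hj2 : j + 2 = j1 + 1 := by omega
    have hb12 : c j < c (j+1) := by
      refine lt_of_le_of_ne ?_ (hB j)
      rw [hj1]; exact hmax j
    have hb32 : c (j+2) < c (j+1) := by
      have hne2 : c (j+1) ≠ c (j+2) := by
        have := hB (j+1)
        rwa [show j+1+1 = j+2 by ring] at this
      refine lt_of_le_of_ne ?_ hne2.symm
      rw [hj1, hj2]; exact hmax (j1+1)
    have hlen : 0 < a (j+1) - a j := sub_pos.mpr (hm (by omega))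
    have hβpos : 0 < a (j+2) - a (j+1) := sub_pos.mpr (hm (by omega))
    have hβirr : Irrational (a (j+2) - a (j+1)) := by
      have hg := gap_cases haeven haodd (j+1)
      rw [show j+1+1 = j+2 by ring] at hg
      rcases hg with h | h
      · rw [h]; simpa using hirr
      · rw [h]
        have : Irrational (1 - α) := by simpa using hirr.intCast_sub 1
        simpa using this
    set β : ℝ := a (j+2) - a (j+1) with hβdef
    set len : ℝ := a (j+1) - a j with hlendef
    -- helper for cosine strictly below one
    have coslt : ∀ x : ℝ, (∀ k : ℤ, (k:ℝ) * (2*Real.pi) ≠ x) → Real.cos x < 1 := by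
      intro x hx
      refine lt_of_le_of_ne (Real.cos_le_one x) ?_
      intro h
      obtain ⟨k, hk⟩ := (Real.cos_eq_one_iff x).mp h
      exact hx k hk
    set n : ℤ := ⌈1 / len⌉ + 1 with hn
    have hn1 : 1 ≤ n := by
      have : 0 < ⌈1 / len⌉ := Int.ceil_pos.mpr (by positivity)
      omega
    have hξ1 : 1 / len < (n:ℝ) := by
      rw [hn]; push_cast; linarith [Int.le_ceil (1 / len)]
    set m : ℤ := ⌈β / len⌉ + 1 with hmdef
    have hm1 : 1 ≤ m := by
      have : 0 < ⌈β / len⌉ := Int.ceil_pos.mpr (by positivity)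
      omega
    have hmβ : β / len < (m:ℝ) := by
      rw [hmdef]; push_cast; linarith [Int.le_ceil (β / len)]
    have hξ2 : 1 / len < (m:ℝ) / β := by
      rw [div_lt_div_iff₀ hlen hβpos]
      have h1 := (div_lt_iff₀ hlen).mp hmβ
      nlinarith
    have hcosn1 : Real.cos (2*Real.pi*(n:ℝ)) = 1 := by
      rw [show 2*Real.pi*(n:ℝ) = (n:ℝ)*(2*Real.pi) by ring]
      exact Real.cos_int_mul_two_pi n
    have hcosnβ : Real.cos (2*Real.pi*(n:ℝ)*β) < 1 := by
      apply coslt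
      intro k hk
      have hkeq : (k:ℝ) = (n:ℝ)*β := by
        have h0 : ((k:ℝ) - (n:ℝ)*β) * (2*Real.pi) = 0 := by linear_combination hk
        rcases mul_eq_zero.mp h0 with h | h
        · linarith [sub_eq_zero.mp h]
        · exact absurd h (by positivity)
      have hne : ((n:ℝ)) ≠ 0 := by
        have : (0:ℝ) < (n:ℝ) := by exact_mod_cast (by omega : (0:ℤ) < n)
        exact this.ne'
      refine hβirr ⟨(k:ℚ)/(n:ℚ), ?_⟩
      push_cast
      rw [div_eq_iff hne]
      linarith [hkeq]
    have hβne : β ≠ 0 := hβpos.ne'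
    have hξ2βeq : 2*Real.pi*((m:ℝ)/β)*β = (m:ℝ)*(2*Real.pi) := by
      field_simp
    have hcosm1 : Real.cos (2*Real.pi*((m:ℝ)/β)*β) = 1 := by
      rw [hξ2βeq]; exact Real.cos_int_mul_two_pi m
    have hcosmξ : Real.cos (2*Real.pi*((m:ℝ)/β)) < 1 := by
      apply coslt
      intro k hk
      have hkeq : (k:ℝ) * β = (m:ℝ) := by
        have h0 : ((k:ℝ) - (m:ℝ)/β) * (2*Real.pi) = 0 := by linear_combination hk
        have h1 : (k:ℝ) = (m:ℝ)/β := by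
          rcases mul_eq_zero.mp h0 with h | h
          · linarith [sub_eq_zero.mp h]
          · exact absurd h (by positivity)
        rw [h1]; field_simp
      have hk0 : ((k:ℝ)) ≠ 0 := by
        intro h
        rw [h, zero_mul] at hkeq
        have : (m:ℝ) ≠ 0 := by
          have : (0:ℝ) < (m:ℝ) := by exact_mod_cast (by omega : (0:ℤ) < m)
          exact this.ne'
        exact this hkeq.symm
      refine hβirr ⟨(m:ℚ)/(k:ℚ), ?_⟩
      push_cast
      rw [div_eq_iff hk0]
      linarith [hkeq]
    set F : ℝ → ℝ := fun ξ => Complex.normSq (Dq c a j ξ) - Complex.normSq (Rq c j ξ)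
      with hFdef
    have hFcont : Continuous F := by
      have hc : Continuous fun ξ : ℝ =>
          Complex.normSq (Dq c a j ξ) - Complex.normSq (Rq c j ξ) := by
        unfold Dq Rq eF
        apply Continuous.sub <;> exact Complex.continuous_normSq.comp (by fun_prop)
      rwa [← hFdef] at hc
    have hFn : 0 < F (n:ℝ) := by
      simp only [hFdef]
      rw [normSq_Dq, normSq_Rq, ← hβdef, hcosn1]
      nlinarith [mul_pos (mul_pos (show (0:ℝ) < c (j+1) - c j by linarith)
        (show (0:ℝ) < c (j+1) - c (j+2) by linarith))
        (show (0:ℝ) < 1 - Real.cos (2*Real.pi*(n:ℝ)*β) by linarith)]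
    have hFm : F ((m:ℝ)/β) < 0 := by
      simp only [hFdef]
      rw [normSq_Dq, normSq_Rq, ← hβdef, hcosm1]
      nlinarith [mul_pos (mul_pos (hcpos j) (hcpos (j+2)))
        (show (0:ℝ) < 1 - Real.cos (2*Real.pi*((m:ℝ)/β)) by linarith)]
    have h0mem : (0:ℝ) ∈ Set.uIcc (F (n:ℝ)) (F ((m:ℝ)/β)) :=
      Set.mem_uIcc.mpr (Or.inr ⟨hFm.le, hFn.le⟩)
    obtain ⟨ξs, hξsmem, hξs0⟩ := intermediate_value_uIcc (hFcont.continuousOn) h0mem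
    have hξsbig : 1 / len < ξs := by
      rcases Set.mem_uIcc.mp hξsmem with ⟨h1, _⟩ | ⟨h1, _⟩
      · linarith
      · linarith
    have hDR : Complex.normSq (Dq c a j ξs) = Complex.normSq (Rq c j ξs) := by
      simp only [hFdef] at hξs0
      linarith
    exact main j ξs hξsbig hDR
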